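/- arXiv:1003.2676 — 2 statements merged into one kernel-verified Lean document; each statement's English description precedes it below -/
import Mathlib

section
/- Let ι be a nonempty finite type and let A be an ι × ι matrix with real entries such that A i j ≥ 0 for all i, j, and A is irreducible in the sense that for all i, j there exists k ∈ ℕ with (A^k) i j > 0. Suppose x, y : ι → ℝ satisfy x i > 0 and y i > 0 for all i, and A·x = δ·x and A·y = δ'·y (matrix–vector multiplication) for real numbers δ, δ'. Then δ = δ' and there exists a real c > 0 with y = c·x. -/
/-!
Normalise `y` against `x` by the largest `c` with `c • x ≤ y`; equality `y i₀ = c * x i₀` holds at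
some `i₀`. Evaluating `A y ≥ A (c • x)` at `i₀` gives `δ ≤ δ'`, and by symmetry `δ = δ'`. Then
`z = y - c • x` is a nonnegative `δ`-eigenvector vanishing at `i₀`, so `(A ^ k z) i₀ = δ ^ k z i₀ = 0`
for all `k`; irreducibility makes some `(A ^ k) i₀ j` positive, which forces `z j = 0` for every `j`.
-/

namespace Matrix

variable {ι R : Type*} [Fintype ι]

lemma mulVec_mono_of_nonneg [Semiring R] [PartialOrder R] [IsOrderedRing R] {A : Matrix ι ι R}
    (hA : ∀ i j, 0 ≤ A i j) {u v : ι → R} (huv : u ≤ v) : A *ᵥ u ≤ A *ᵥ v :=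
  fun i => dotProduct_le_dotProduct_of_nonneg_left huv (hA i)

lemma pow_mulVec_of_mulVec_eq_smul [CommSemiring R] [DecidableEq ι] {A : Matrix ι ι R}
    {z : ι → R} {δ : R} (hz : A *ᵥ z = δ • z) (k : ℕ) : A ^ k *ᵥ z = δ ^ k • z := by
  induction k with
  | zero => simp
  | succ k ih => rw [pow_succ', ← mulVec_mulVec, ih, mulVec_smul, hz, smul_smul, pow_succ]

lemma eq_zero_of_mulVec_eq_smul_of_apply_eq_zero [CommRing R] [LinearOrder R]
    [IsStrictOrderedRing R] [DecidableEq ι] {A : Matrix ι ι R} (hA : ∀ i j, 0 ≤ A i j) {i : ι}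
    (hreach : ∀ j, ∃ k : ℕ, 0 < (A ^ k) i j) {z : ι → R} {δ : R} (hz : A *ᵥ z = δ • z)
    (hz_nonneg : 0 ≤ z) (hzi : z i = 0) : z = 0 := by
  funext j
  obtain ⟨k, hk⟩ := hreach j
  have hsum : ∑ l, (A ^ k) i l * z l = 0 := by
    simpa [hzi, mulVec, dotProduct] using congrFun (pow_mulVec_of_mulVec_eq_smul hz k) i
  have hterm := (Finset.sum_eq_zero_iff_of_nonneg fun l _ =>
    mul_nonneg (pow_apply_nonneg hA k i l) (hz_nonneg l)).1 hsum j (Finset.mem_univ j)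
  exact (mul_eq_zero.1 hterm).resolve_left hk.ne'

variable [Field R] [LinearOrder R] [IsStrictOrderedRing R]

lemma exists_smul_le_of_pos [Nonempty ι] {x : ι → R} (hx : ∀ i, 0 < x i) (y : ι → R) :
    ∃ c i₀, c • x ≤ y ∧ y i₀ = c * x i₀ := by
  obtain ⟨i₀, hmin⟩ := Finite.exists_min fun i => y i / x i
  refine ⟨y i₀ / x i₀, i₀, fun j => ?_, (div_mul_cancel₀ _ (hx i₀).ne').symm⟩
  simpa [le_div_iff₀ (hx j)] using hmin j

lemma le_of_mulVec_eq_smul_of_pos [Nonempty ι] {A : Matrix ι ι R} (hA : ∀ i j, 0 ≤ A i j)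
    {x y : ι → R} (hx : ∀ i, 0 < x i) (hy : ∀ i, 0 < y i) {δ δ' : R}
    (hAx : A *ᵥ x = δ • x) (hAy : A *ᵥ y = δ' • y) : δ ≤ δ' := by
  obtain ⟨c, i₀, hcy, hi₀⟩ := exists_smul_le_of_pos hx y
  have hle : δ * y i₀ ≤ δ' * y i₀ :=
    calc δ * y i₀ = (A *ᵥ (c • x)) i₀ := by
          rw [mulVec_smul, hAx, hi₀]; simp only [Pi.smul_apply, smul_eq_mul]; ring
      _ ≤ (A *ᵥ y) i₀ := mulVec_mono_of_nonneg hA hcy i₀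
      _ = δ' * y i₀ := by rw [hAy]; rfl
  exact le_of_mul_le_mul_right hle (hy i₀)

end Matrix

open Matrix in
/-- **Perron–Frobenius uniqueness.** Let `A` be an entrywise nonnegative
irreducible square matrix over `ℝ` (irreducible: for all `i j` some power of `A` has a
positive `(i,j)` entry).  If `x` and `y` are entrywise positive eigenvectors, `A x = δ x`
and `A y = δ' y`, then `δ = δ'` and `y` is a positive scalar multiple of `x`. -/
theorem perron_frobenius_positive_eigenvector_unique
    {ι : Type*} [Fintype ι] [DecidableEq ι] [Nonempty ι] (A : Matrix ι ι ℝ)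
    (hA : ∀ i j, 0 ≤ A i j)
    (hirr : ∀ i j, ∃ k : ℕ, 0 < (A ^ k) i j)
    (x y : ι → ℝ) (hx : ∀ i, 0 < x i) (hy : ∀ i, 0 < y i)
    (δ δ' : ℝ) (hAx : A.mulVec x = δ • x) (hAy : A.mulVec y = δ' • y) :
    δ = δ' ∧ ∃ c : ℝ, 0 < c ∧ y = c • x := by
  obtain rfl : δ = δ' :=
    le_antisymm (le_of_mulVec_eq_smul_of_pos hA hx hy hAx hAy)
      (le_of_mulVec_eq_smul_of_pos hA hy hx hAy hAx)
  obtain ⟨c, i₀, hcy, hi₀⟩ := exists_smul_le_of_pos hx y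
  have hz : A *ᵥ (y - c • x) = δ • (y - c • x) := by
    rw [mulVec_sub, mulVec_smul, hAx, hAy, smul_sub, smul_comm]
  have hz_zero := eq_zero_of_mulVec_eq_smul_of_apply_eq_zero hA (hirr i₀) hz (sub_nonneg.2 hcy)
    (by simp [hi₀])
  exact ⟨rfl, c, (pos_iff_pos_of_mul_pos (hi₀ ▸ hy i₀)).2 (hx i₀), sub_eq_zero.1 hz_zero⟩
end

section
/- Let H be a complex Hilbert space and let φ be a bijective ℂ-algebra homomorphism from the algebra B(H) of bounded linear operators on H to itself satisfying φ(T*) = φ(T)* for all T ∈ B(H). Then there exists a unitary operator U on H such that φ(T) = U T U* for all T ∈ B(H). -/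
/-- Every bijective `ℂ`-algebra endomorphism of `B(H)` (for `H` a
complex Hilbert space) which preserves the adjoint is implemented by a unitary:
`φ T = U * T * U⋆` for some unitary `U ∈ B(H)`. -/
theorem star_algebra_automorphism_of_bounded_operators_inner
    {H : Type*} [NormedAddCommGroup H] [InnerProductSpace ℂ H] [CompleteSpace H]
    (φ : (H →L[ℂ] H) →ₐ[ℂ] (H →L[ℂ] H))
    (hbij : Function.Bijective φ)
    (hstar : ∀ T : H →L[ℂ] H, φ (star T) = star (φ T)) :
    ∃ U : H →L[ℂ] H, U ∈ unitary (H →L[ℂ] H) ∧ ∀ T : H →L[ℂ] H, φ T = U * T * star U := by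
  let ψ : (H →L[ℂ] H) ≃⋆ₐ[ℂ] (H →L[ℂ] H) :=
    .ofBijective (⟨φ, hstar⟩ : (H →L[ℂ] H) →⋆ₐ[ℂ] (H →L[ℂ] H)) hbij
  -- `ψ` is continuous automatically: it is a positive map between C⋆-algebras.
  obtain ⟨U, hU⟩ := ψ.eq_linearIsometryEquivConjStarAlgEquiv (map_continuous ψ)
  refine ⟨U, (Unitary.linearIsometryEquiv.symm U).2, fun T => ?_⟩
  rw [U.star_eq_symm]
  exact congr($hU T)
end
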